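/- Let P = f·λ_d be a Borel probability measure on ℝ^d, let r > 0 with ∫ |x|^r dP(x) < ∞, and let (α_n)_{n≥1} be a sequence of finite codebooks such that ∫ d(x,α_n)^r dP(x) → 0 as n → ∞. Let θ > 0 and μ ∈ ℝ^d be such that (θ,μ) is P-admissible and hypothesis (H1) holds. Then for every p ∈ (0,1) and every b > 0, the function ψ_b^p is locally P_{θ,μ}-integrable, i.e. ∫_K ψ_b^p dP_{θ,μ} < ∞ for every compact set K ⊂ ℝ^d. -/

import Mathlib

open MeasureTheory ENNReal Filter Set Metric Topology
open scoped Classical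

noncomputable section

/-- Distance from a point `x` to a finite codebook `α`. -/
def qdist {d : ℕ} (x : EuclideanSpace ℝ (Fin d)) (α : Finset (EuclideanSpace ℝ (Fin d))) : ℝ :=
  Metric.infDist x (α : Set (EuclideanSpace ℝ (Fin d)))

/-- The `r`-th power `L^r` quantization error `∫ d(x,α)^r dP` of a codebook `α`. -/
def qerr {d : ℕ} (P : Measure (EuclideanSpace ℝ (Fin d))) (r : ℝ)
    (α : Finset (EuclideanSpace ℝ (Fin d))) : ℝ≥0∞ :=
  ∫⁻ x, ENNReal.ofReal (qdist x α) ^ r ∂P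

/-- The optimal `n`-level `L^r` quantization error `e_{n,r}(P)`. -/
def enr {d : ℕ} (P : Measure (EuclideanSpace ℝ (Fin d))) (r : ℝ) (n : ℕ) : ℝ≥0∞ :=
  ⨅ (α : Finset (EuclideanSpace ℝ (Fin d))) (_ : α.Nonempty) (_ : α.card ≤ n),
    qerr P r α ^ (1 / r)

/-- The uniform distribution on the unit cube `[0,1]^d`. -/
def unifCube (d : ℕ) : Measure (EuclideanSpace ℝ (Fin d)) :=
  volume.restrict {x | ∀ i, x i ∈ Icc (0 : ℝ) 1}

/-- The constant `J_{r,d} = inf_{n ≥ 1} n^{r/d} e_{n,r}(U([0,1]^d))^r`. -/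
def Jrd (r : ℝ) (d : ℕ) : ℝ≥0∞ :=
  ⨅ (n : ℕ) (_ : 1 ≤ n), (n : ℝ≥0∞) ^ (r / (d : ℝ)) * enr (unifCube d) r n ^ r

/-- Zador's constant `Q_r(P)` for a measure whose a.c. part has density `f`. -/
def Qr {d : ℕ} (f : EuclideanSpace ℝ (Fin d) → ℝ) (r : ℝ) : ℝ≥0∞ :=
  Jrd r d * (∫⁻ x, ENNReal.ofReal (f x) ^ ((d : ℝ) / ((d : ℝ) + r))) ^ (((d : ℝ) + r) / (d : ℝ))

/-- The dilated/contracted codebook `α^{θ,μ} = μ + θ(α - μ)`. -/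
def dilate {d : ℕ} (α : Finset (EuclideanSpace ℝ (Fin d))) (θ : ℝ)
    (μ : EuclideanSpace ℝ (Fin d)) : Finset (EuclideanSpace ℝ (Fin d)) :=
  α.image fun a => μ + θ • (a - μ)

/-- `f_{θ,μ}(x) = f(μ + θ(x-μ))`. -/
def fdil {d : ℕ} (f : EuclideanSpace ℝ (Fin d) → ℝ) (θ : ℝ)
    (μ x : EuclideanSpace ℝ (Fin d)) : ℝ :=
  f (μ + θ • (x - μ))

/-- The image measure `P_{θ,μ}` of `P` under `x ↦ (x-μ)/θ + μ`. -/
def Pdil {d : ℕ} (P : Measure (EuclideanSpace ℝ (Fin d))) (θ : ℝ)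
    (μ : EuclideanSpace ℝ (Fin d)) : Measure (EuclideanSpace ℝ (Fin d)) :=
  Measure.map (fun x => μ + θ⁻¹ • (x - μ)) P

/-- `(θ,μ)` is `P`-admissible for `P = f·λ_d`:
`{f>0} ⊆ μ(1-θ) + θ{f>0}` up to a `λ_d`-null set.  (Note that
`x ∈ μ(1-θ) + θ{f>0}` iff `f((x-μ)/θ + μ) > 0`.) -/
def Admissible {d : ℕ} (f : EuclideanSpace ℝ (Fin d) → ℝ) (θ : ℝ)
    (μ : EuclideanSpace ℝ (Fin d)) : Prop :=
  ∀ᵐ x ∂(volume : Measure (EuclideanSpace ℝ (Fin d))),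
    0 < f x → 0 < f (μ + θ⁻¹ • (x - μ))

/-- The maximal function `ψ_b` attached to `P` and the sequence of codebooks `α`. -/
def maxFun {d : ℕ} (P : Measure (EuclideanSpace ℝ (Fin d)))
    (α : ℕ → Finset (EuclideanSpace ℝ (Fin d))) (b : ℝ)
    (x : EuclideanSpace ℝ (Fin d)) : ℝ≥0∞ :=
  ⨆ (n : ℕ) (_ : 1 ≤ n),
    volume (Metric.ball x (b * qdist x (α n))) / P (Metric.ball x (b * qdist x (α n)))

/-- An `L^r(P)`-optimal sequence of `n`-quantizers. -/
def OptimalSeq {d : ℕ} (P : Measure (EuclideanSpace ℝ (Fin d))) (r : ℝ)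
    (α : ℕ → Finset (EuclideanSpace ℝ (Fin d))) : Prop :=
  ∀ n, 1 ≤ n → (α n).Nonempty ∧ (α n).card ≤ n ∧ qerr P r (α n) = enr P r n ^ r

/-- An asymptotically `L^r(P)`-optimal sequence of quantizers,
for `P` whose a.c. part has density `f`. -/
def AsympOptimalSeq {d : ℕ} (P : Measure (EuclideanSpace ℝ (Fin d)))
    (f : EuclideanSpace ℝ (Fin d) → ℝ) (r : ℝ)
    (α : ℕ → Finset (EuclideanSpace ℝ (Fin d))) : Prop :=
  (∀ n, 1 ≤ n → (α n).Nonempty ∧ (α n).card ≤ n) ∧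
  Tendsto (fun n : ℕ => (n : ℝ≥0∞) ^ (r / (d : ℝ)) * qerr P r (α n)) atTop (𝓝 (Qr f r))

/-- `L^s(P)`-rate-optimality of a sequence of codebooks. -/
def RateOptimal {d : ℕ} (P : Measure (EuclideanSpace ℝ (Fin d))) (s : ℝ)
    (β : ℕ → Finset (EuclideanSpace ℝ (Fin d))) : Prop :=
  limsup (fun n : ℕ => (n : ℝ≥0∞) ^ (s / (d : ℝ)) * qerr P s (β n)) atTop < ⊤

/-- The support of a measure. -/
def msupp {d : ℕ} (P : Measure (EuclideanSpace ℝ (Fin d))) : Set (EuclideanSpace ℝ (Fin d)) :=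
  {x | ∀ ε > 0, 0 < P (Metric.ball x ε)}

/-- Hypothesis (H1): for every `M > 0`,
`sup { f(μ+θ(z-μ))/f(z) : z ∈ B(0,M), f(z) > 0 } < ∞`. -/
def H1 {d : ℕ} (f : EuclideanSpace ℝ (Fin d) → ℝ) (θ : ℝ)
    (μ : EuclideanSpace ℝ (Fin d)) : Prop :=
  ∀ M > (0 : ℝ), ∃ C : ℝ, ∀ z ∈ Metric.ball (0 : EuclideanSpace ℝ (Fin d)) M,
    0 < f z → f (μ + θ • (z - μ)) / f z ≤ C

/-- Hypothesis (H2). -/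
def H2 {d : ℕ} (P : Measure (EuclideanSpace ℝ (Fin d))) (θ : ℝ)
    (μ : EuclideanSpace ℝ (Fin d)) (s r : ℝ) : Prop :=
  ∃ b ∈ Ioo (0 : ℝ) (1 / 2), ∃ M > (0 : ℝ),
    (∫⁻ x in {x : EuclideanSpace ℝ (Fin d) | M < ‖x‖},
      (⨆ t ∈ Ioc (0 : ℝ) (2 * b * ‖x‖),
        volume (Metric.ball x t) / P (Metric.ball x t)) ^ (s / ((d : ℝ) + r))
      ∂(Pdil P θ μ)) < ⊤

/-- Hypothesis (H3): `λ_d(· ∩ supp P) ≪ P` and `supp P` is a finite union of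
closed convex sets. -/
def H3 {d : ℕ} (P : Measure (EuclideanSpace ℝ (Fin d))) : Prop :=
  volume.restrict (msupp P) ≪ P ∧
  ∃ (k : ℕ) (C : Fin k → Set (EuclideanSpace ℝ (Fin d))),
    (∀ i, IsClosed (C i) ∧ Convex ℝ (C i)) ∧ msupp P = ⋃ i, C i

/-!
Under `y = μ + θ (x - μ)` the measure `P_{θ,μ}` has density `θ^d f_{θ,μ}`, and on a compact set
`K` admissibility and (H1) bound `f_{θ,μ}` by `C f` almost everywhere, so it suffices to show
`∫_K ψ_b^p dP < ∞`. Since `∫ d(x,α_n)^r dP → 0`, the codebooks cannot escape to infinity, so for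
`x ∈ K` all radii `b d(x,α_n)` are uniformly bounded and the balls defining `ψ_b` stay in a fixed
ball `B`. The Besicovitch covering theorem then gives the weak type estimate
`c P(K ∩ {ψ_b > c}) ≤ N λ_d(B)`, and a weak-`L¹` function is in `L^p` for `p < 1` on a finite
measure space.
-/

section BallMeasure

variable {X : Type*} [PseudoMetricSpace X] [MeasurableSpace X]

theorem exists_lt_radius_lt_measure_ball (μ : Measure X) {x : X} {t : ℝ} {c : ℝ≥0∞}
    (hc : c < μ (ball x t)) : ∃ s < t, c < μ (ball x s) := by
  obtain ⟨u, hu_mono, hu_lt, hu_lim⟩ := exists_seq_strictMono_tendsto t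
  have hU : ⋃ n, ball x (u n) = ball x t := by
    refine Subset.antisymm (iUnion_subset fun n => ball_subset_ball (hu_lt n).le) fun y hy => ?_
    obtain ⟨n, hn⟩ := (hu_lim.eventually (lt_mem_nhds (mem_ball.1 hy))).exists
    exact mem_iUnion.2 ⟨n, hn⟩
  have hmono : Monotone fun n => ball x (u n) := fun _ _ h => ball_subset_ball (hu_mono.monotone h)
  rw [← hU, hmono.measure_iUnion] at hc
  obtain ⟨n, hn⟩ := lt_iSup_iff.1 hc
  exact ⟨u n, hu_lt n, hn⟩

theorem lowerSemicontinuous_measure_ball (μ : Measure X) :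
    LowerSemicontinuous fun q : X × ℝ => μ (ball q.1 q.2) := by
  rintro ⟨x, t⟩ c hc
  obtain ⟨s, hst, hcs⟩ := exists_lt_radius_lt_measure_ball μ hc
  have hopen : IsOpen {q : X × ℝ | s + dist x q.1 < q.2} :=
    isOpen_lt (continuous_const.add (continuous_const.dist continuous_fst)) continuous_snd
  filter_upwards [hopen.mem_nhds (by simpa using hst)] with q hq
  exact hcs.trans_le (measure_mono (ball_subset_ball' hq.le))

end BallMeasure

open Besicovitch in
theorem exists_mul_measure_le_of_forall_lt_measure_ball
    (X : Type*) [MetricSpace X] [MeasurableSpace X] [OpensMeasurableSpace X]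
    [SecondCountableTopology X] [HasBesicovitchCovering X] :
    ∃ N : ℕ, ∀ (μ ν : Measure X) (c : ℝ≥0∞) (R : ℝ) (s : Set X),
      (∀ x ∈ s, ∃ t ∈ Ioc 0 R, c * μ (ball x t) < ν (ball x t)) → c * μ s ≤ N * ν univ := by
  obtain ⟨N, τ, hτ, hN⟩ := HasBesicovitchCovering.no_satelliteConfig (α := X)
  refine ⟨N, fun μ ν c R s hs => ?_⟩
  choose t ht hlt using fun x : s => hs x x.2
  let q : BallPackage s X := ⟨Subtype.val, t, fun j => (ht j).1, R, fun j => (ht j).2⟩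
  obtain ⟨F, hFd, hFc⟩ := exist_disjoint_covering_families hτ hN q
  have hfamily : ∀ i, c * μ (⋃ j ∈ F i, ball (q.c j) (q.r j)) ≤ ν univ := by
    intro i
    have hdisj : (F i).PairwiseDisjoint fun j => ball (q.c j) (q.r j) :=
      (hFd i).mono fun j => ball_subset_closedBall
    have hcount : (F i).Countable :=
      hdisj.countable_of_isOpen (fun _ _ => isOpen_ball) fun j _ => nonempty_ball.2 (q.rpos j)
    have := hcount.to_subtype
    calc c * μ (⋃ j ∈ F i, ball (q.c j) (q.r j))
        ≤ c * ∑' j : F i, μ (ball (q.c j) (q.r j)) := by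
          gcongr; exact measure_biUnion_le μ hcount _
      _ = ∑' j : F i, c * μ (ball (q.c j) (q.r j)) := ENNReal.tsum_mul_left.symm
      _ ≤ ∑' j : F i, ν (ball (q.c j) (q.r j)) := ENNReal.tsum_le_tsum fun j => (hlt j).le
      _ = ν (⋃ j ∈ F i, ball (q.c j) (q.r j)) :=
          (measure_biUnion hcount hdisj fun _ _ => measurableSet_ball).symm
      _ ≤ ν univ := measure_mono (subset_univ _)
  calc c * μ s ≤ c * ∑ i, μ (⋃ j ∈ F i, ball (q.c j) (q.r j)) := by
        gcongr
        exact (measure_mono fun x hx => hFc ⟨⟨x, hx⟩, rfl⟩).trans (measure_iUnion_fintype_le _ _)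
    _ = ∑ i, c * μ (⋃ j ∈ F i, ball (q.c j) (q.r j)) := Finset.mul_sum _ _ _
    _ ≤ ∑ _i : Fin N, ν univ := Finset.sum_le_sum fun i _ => hfamily i
    _ = N * ν univ := by simp

theorem rpow_le_one_add_tsum_indicator {X : Type*} (ψ : X → ℝ≥0∞) {p : ℝ} (hp : 0 < p) (x : X) :
    ψ x ^ p ≤ 1 + ∑' k : ℕ, {y | 2 ^ k < ψ y}.indicator (fun _ => (2 ^ p) ^ (k + 1)) x := by
  rcases le_or_gt (ψ x) 1 with hle | hgt
  · exact (ENNReal.rpow_le_one hle hp.le).trans le_self_add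
  refine le_add_left ?_
  by_cases htop : ψ x = ⊤
  · have hone : (1 : ℝ≥0∞) ≤ 2 ^ p := ENNReal.one_le_rpow (by norm_num) hp
    calc ψ x ^ p ≤ ∑' _ : ℕ, (1 : ℝ≥0∞) := by
          rw [ENNReal.tsum_const_eq_top_of_ne_zero one_ne_zero]; exact le_top
      _ ≤ _ := ENNReal.tsum_le_tsum fun k => by
          simpa [htop, ENNReal.pow_lt_top] using one_le_pow₀ hone
  have hex : ∃ k : ℕ, ψ x ≤ 2 ^ (k + 1) := by
    obtain ⟨n, hn⟩ := ENNReal.exists_nat_gt htop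
    refine ⟨n, hn.le.trans ?_⟩
    exact_mod_cast (n.lt_two_pow_self.trans (Nat.pow_lt_pow_right one_lt_two n.lt_succ_self)).le
  have hk : 2 ^ Nat.find hex < ψ x := by
    cases h : Nat.find hex with
    | zero => simpa using hgt
    | succ m => exact not_le.1 (Nat.find_min hex (by omega))
  calc ψ x ^ p ≤ (2 ^ (Nat.find hex + 1)) ^ p := ENNReal.rpow_le_rpow (Nat.find_spec hex) hp.le
    _ = (2 ^ p) ^ (Nat.find hex + 1) := by
        rw [← ENNReal.rpow_natCast, ← ENNReal.rpow_natCast, ← ENNReal.rpow_mul, ← ENNReal.rpow_mul,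
          mul_comm]
    _ ≤ _ := by
        refine le_of_eq_of_le ?_ (ENNReal.le_tsum (Nat.find hex))
        simp [hk]

theorem lintegral_rpow_lt_top_of_dyadic_tail_le {X : Type*} [MeasurableSpace X] {μ : Measure X}
    [IsFiniteMeasure μ] {ψ : X → ℝ≥0∞} (hψ : Measurable ψ) {p : ℝ} (hp0 : 0 < p) (hp1 : p < 1)
    {A : ℝ≥0∞} (hA : A ≠ ⊤) (htail : ∀ k : ℕ, 2 ^ k * μ {x | 2 ^ k < ψ x} ≤ A) :
    ∫⁻ x, ψ x ^ p ∂μ < ⊤ := by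
  set q : ℝ≥0∞ := 2 ^ p
  have hq : q ≠ ⊤ := ENNReal.rpow_ne_top_of_nonneg hp0.le ENNReal.ofNat_ne_top
  have hratio : q * 2⁻¹ < 1 := by
    have hq2 : q < 2 := by
      simpa using ENNReal.rpow_lt_rpow_of_exponent_lt (x := 2) one_lt_two ENNReal.ofNat_ne_top hp1
    rwa [← div_eq_mul_inv, ENNReal.div_lt_iff (Or.inl two_ne_zero) (Or.inl ENNReal.ofNat_ne_top),
      one_mul]
  have hmeas : ∀ k : ℕ, MeasurableSet {x | 2 ^ k < ψ x} := fun k => hψ measurableSet_Ioi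
  have hterm : ∀ k : ℕ, q ^ (k + 1) * μ {x | 2 ^ k < ψ x} ≤ q * A * (q * 2⁻¹) ^ k := by
    intro k
    have hcancel : (q * 2⁻¹) ^ k * 2 ^ k = q ^ k := by
      rw [mul_pow, mul_assoc, ← ENNReal.inv_pow, ENNReal.inv_mul_cancel
        (pow_ne_zero k two_ne_zero) (ENNReal.pow_ne_top ENNReal.ofNat_ne_top), mul_one]
    calc q ^ (k + 1) * μ {x | 2 ^ k < ψ x}
        = q * (q * 2⁻¹) ^ k * (2 ^ k * μ {x | 2 ^ k < ψ x}) := by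
          rw [pow_succ', ← hcancel]; ring
      _ ≤ q * (q * 2⁻¹) ^ k * A := by gcongr; exact htail k
      _ = q * A * (q * 2⁻¹) ^ k := by ring
  calc ∫⁻ x, ψ x ^ p ∂μ
      ≤ ∫⁻ x, 1 + ∑' k : ℕ, {y | 2 ^ k < ψ y}.indicator (fun _ => q ^ (k + 1)) x ∂μ :=
        lintegral_mono (rpow_le_one_add_tsum_indicator ψ hp0)
    _ = μ univ + ∑' k : ℕ, q ^ (k + 1) * μ {x | 2 ^ k < ψ x} := by
        rw [lintegral_add_left measurable_const, lintegral_one,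
          lintegral_tsum fun k => (measurable_const.indicator (hmeas k)).aemeasurable]
        simp_rw [lintegral_indicator_const (hmeas _)]
    _ ≤ μ univ + ∑' k : ℕ, q * A * (q * 2⁻¹) ^ k :=
        add_le_add_right (ENNReal.tsum_le_tsum hterm) _
    _ = μ univ + q * A * (1 - q * 2⁻¹)⁻¹ := by rw [ENNReal.tsum_mul_left, ENNReal.tsum_geometric]
    _ < ⊤ := by
        have : (1 - q * 2⁻¹)⁻¹ ≠ ⊤ := ENNReal.inv_ne_top.2 (tsub_pos_of_lt hratio).ne'
        finiteness

section Quantization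

variable {d : ℕ}

theorem qdist_le_qdist_add_dist (x y : EuclideanSpace ℝ (Fin d))
    (α : Finset (EuclideanSpace ℝ (Fin d))) : qdist x α ≤ qdist y α + dist x y :=
  infDist_le_infDist_add_dist

theorem rpow_mul_measure_closedBall_le_qerr (P : Measure (EuclideanSpace ℝ (Fin d))) {r : ℝ}
    (hr : 0 ≤ r) (α : Finset (EuclideanSpace ℝ (Fin d))) (ρ : ℝ) :
    ENNReal.ofReal (qdist 0 α - ρ) ^ r * P (closedBall 0 ρ) ≤ qerr P r α := by
  calc ENNReal.ofReal (qdist 0 α - ρ) ^ r * P (closedBall 0 ρ)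
      = ∫⁻ _ in closedBall 0 ρ, ENNReal.ofReal (qdist 0 α - ρ) ^ r ∂P :=
        (setLIntegral_const _ _).symm
    _ ≤ ∫⁻ x in closedBall 0 ρ, ENNReal.ofReal (qdist x α) ^ r ∂P := by
        refine setLIntegral_mono' measurableSet_closedBall fun x hx => ?_
        have hx : dist 0 x ≤ ρ := by rwa [dist_comm, ← mem_closedBall]
        have := qdist_le_qdist_add_dist 0 x α
        exact ENNReal.rpow_le_rpow (ENNReal.ofReal_le_ofReal (by linarith)) hr
    _ ≤ qerr P r α := setLIntegral_le_lintegral _ _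

theorem exists_qdist_zero_le_of_tendsto_qerr {P : Measure (EuclideanSpace ℝ (Fin d))} [NeZero P]
    {r : ℝ} (hr : 0 < r) {α : ℕ → Finset (EuclideanSpace ℝ (Fin d))}
    (hconv : Tendsto (fun n => qerr P r (α n)) atTop (𝓝 0)) :
    ∃ R, ∀ n, qdist 0 (α n) ≤ R := by
  obtain ⟨ρ, hρ⟩ : ∃ ρ : ℕ, P (closedBall 0 ρ) ≠ 0 := by
    by_contra! h
    refine NeZero.ne P (Measure.measure_univ_eq_zero.1 ?_)
    rw [← iUnion_closedBall_nat 0]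
    exact measure_iUnion_null h
  have hev : ∀ᶠ n in atTop, qdist 0 (α n) ≤ ρ + 1 := by
    filter_upwards [hconv.eventually (gt_mem_nhds (pos_iff_ne_zero.2 hρ))] with n hn
    by_contra! hfar
    have hone : 1 ≤ ENNReal.ofReal (qdist 0 (α n) - ρ) ^ r :=
      ENNReal.one_le_rpow (by rw [ENNReal.one_le_ofReal]; linarith) hr
    refine hn.not_ge ?_
    calc P (closedBall 0 ρ) ≤ ENNReal.ofReal (qdist 0 (α n) - ρ) ^ r * P (closedBall 0 ρ) :=
          le_mul_of_one_le_left' hone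
      _ ≤ qerr P r (α n) := rpow_mul_measure_closedBall_le_qerr P hr.le _ _
  obtain ⟨R, hR⟩ := (isBoundedUnder_of_eventually_le hev).bddAbove_range
  exact ⟨R, fun n => hR ⟨n, rfl⟩⟩

end Quantization

section MaximalFunction

variable {d : ℕ}

theorem measurable_maxFun (P : Measure (EuclideanSpace ℝ (Fin d)))
    (α : ℕ → Finset (EuclideanSpace ℝ (Fin d))) (b : ℝ) : Measurable (maxFun P α b) := by
  refine Measurable.iSup fun n => Measurable.iSup_Prop _ ?_
  have hball : Continuous fun x : EuclideanSpace ℝ (Fin d) => (x, b * qdist x (α n)) :=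
    continuous_id.prodMk (continuous_const.mul (continuous_infDist_pt _))
  have hvol := (lowerSemicontinuous_measure_ball (volume : Measure (EuclideanSpace ℝ (Fin d))))
    |>.measurable.comp hball.measurable
  have hP := (lowerSemicontinuous_measure_ball P).measurable.comp hball.measurable
  exact hvol.div hP

theorem exists_mul_measure_lt_maxFun_le (P : Measure (EuclideanSpace ℝ (Fin d)))
    {α : ℕ → Finset (EuclideanSpace ℝ (Fin d))} {R : ℝ} (hR : ∀ n, qdist 0 (α n) ≤ R)
    {b : ℝ} (hb : 0 ≤ b) {K : Set (EuclideanSpace ℝ (Fin d))} (hK : Bornology.IsBounded K) :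
    ∃ A ≠ ⊤, ∀ c, c * P ({x | c < maxFun P α b x} ∩ K) ≤ A := by
  obtain ⟨M, hKM⟩ := hK.subset_closedBall 0
  obtain ⟨N, hN⟩ := exists_mul_measure_le_of_forall_lt_measure_ball (EuclideanSpace ℝ (Fin d))
  set ν := volume.restrict (closedBall (0 : EuclideanSpace ℝ (Fin d)) (M + b * (R + M)))
  refine ⟨N * ν univ, ?_, fun c => hN P ν c (b * (R + M)) _ ?_⟩
  · exact ENNReal.mul_ne_top (ENNReal.natCast_ne_top N)
      (by rw [Measure.restrict_apply_univ]; exact measure_closedBall_lt_top.ne)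
  rintro x ⟨hcx, hxK⟩
  obtain ⟨n, hn⟩ := lt_iSup_iff.1 (show c < maxFun P α b x from hcx)
  obtain ⟨-, hn⟩ := lt_iSup_iff.1 hn
  have hlt := ENNReal.mul_lt_of_lt_div hn
  have hxM : ‖x‖ ≤ M := by simpa using hKM hxK
  have hqx : qdist x (α n) ≤ R + M :=
    (qdist_le_qdist_add_dist x 0 (α n)).trans (add_le_add (hR n) (by rwa [dist_zero_right]))
  have hsub : ball x (b * qdist x (α n)) ⊆ closedBall 0 (M + b * (R + M)) := by
    refine ball_subset_closedBall.trans (closedBall_subset_closedBall' ?_)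
    have : b * qdist x (α n) ≤ b * (R + M) := mul_le_mul_of_nonneg_left hqx hb
    rw [dist_zero_right]
    linarith
  refine ⟨b * qdist x (α n), ⟨?_, mul_le_mul_of_nonneg_left hqx hb⟩, ?_⟩
  · exact nonempty_ball.1 (nonempty_of_measure_ne_zero (ne_bot_of_gt hlt))
  · rwa [Measure.restrict_eq_self _ hsub]

theorem setLIntegral_maxFun_rpow_lt_top (P : Measure (EuclideanSpace ℝ (Fin d)))
    [IsFiniteMeasure P] {α : ℕ → Finset (EuclideanSpace ℝ (Fin d))} {R : ℝ}
    (hR : ∀ n, qdist 0 (α n) ≤ R) {b : ℝ} (hb : 0 ≤ b) {K : Set (EuclideanSpace ℝ (Fin d))}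
    (hK : IsCompact K) {p : ℝ} (hp0 : 0 < p) (hp1 : p < 1) :
    ∫⁻ x in K, maxFun P α b x ^ p ∂P < ⊤ := by
  obtain ⟨A, hA, hweak⟩ := exists_mul_measure_lt_maxFun_le P hR hb hK.isBounded
  refine lintegral_rpow_lt_top_of_dyadic_tail_le (measurable_maxFun P α b) hp0 hp1 hA fun k => ?_
  rw [Measure.restrict_apply (measurableSet_lt measurable_const (measurable_maxFun P α b))]
  exact hweak _

end MaximalFunction

theorem map_homothety_addHaar {E : Type*} [NormedAddCommGroup E] [NormedSpace ℝ E]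
    [MeasurableSpace E] [BorelSpace E] [FiniteDimensional ℝ E] (μ : Measure E)
    [μ.IsAddHaarMeasure] (c : E) {r : ℝ} (hr : r ≠ 0) :
    μ.map (fun x => c + r • (x - c)) = ENNReal.ofReal |(r ^ Module.finrank ℝ E)⁻¹| • μ := by
  have h : (fun x => c + r • (x - c)) = (c + ·) ∘ (r • ·) ∘ (· + -c) := by
    funext x; simp [sub_eq_add_neg]
  rw [h, ← Measure.map_map (measurable_const_add c) ((measurable_const_smul r).comp
    (measurable_add_const _)), ← Measure.map_map (measurable_const_smul r) (measurable_add_const _),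
    map_add_right_eq_self, Measure.map_addHaar_smul μ hr, Measure.map_smul, map_add_left_eq_self]

section Dilation

variable {d : ℕ}

theorem pdil_withDensity_ofReal {f : EuclideanSpace ℝ (Fin d) → ℝ} (hf : Measurable f)
    {θ : ℝ} (hθ : 0 < θ) (μ : EuclideanSpace ℝ (Fin d)) :
    Pdil (volume.withDensity fun x => ENNReal.ofReal (f x)) θ μ
      = ENNReal.ofReal (θ ^ d) • volume.withDensity fun y => ENNReal.ofReal (fdil f θ μ y) := by
  set T : EuclideanSpace ℝ (Fin d) → EuclideanSpace ℝ (Fin d) := fun x => μ + θ⁻¹ • (x - μ)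
  have hT : Measurable T := (measurable_const_add μ).comp
    ((measurable_const_smul _).comp (measurable_id.sub_const μ))
  have hfdil_T : ∀ x, fdil f θ μ (T x) = f x := fun x => by
    simp [T, fdil, smul_smul, hθ.ne']
  have hmap : volume.map T = ENNReal.ofReal (θ ^ d) • volume := by
    rw [map_homothety_addHaar _ _ (inv_ne_zero hθ.ne'), finrank_euclideanSpace_fin, inv_pow,
      inv_inv, abs_of_pos (pow_pos hθ d)]
  have hfdil : Measurable fun y => ENNReal.ofReal (fdil f θ μ y) :=
    (hf.comp ((measurable_const_add μ).comp
      ((measurable_const_smul θ).comp (measurable_id.sub_const μ)))).ennreal_ofReal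
  ext s hs
  rw [Pdil, Measure.map_apply hT hs, withDensity_apply _ (hT hs), Measure.smul_apply,
    withDensity_apply _ hs, ← lintegral_smul_measure, ← Measure.restrict_smul, ← hmap,
    setLIntegral_map hs hfdil hT]
  simp_rw [hfdil_T]

theorem Admissible.ae_pos_of_fdil_pos {f : EuclideanSpace ℝ (Fin d) → ℝ} {θ : ℝ}
    {μ : EuclideanSpace ℝ (Fin d)} (hadm : Admissible f θ μ) (hθ : θ ≠ 0) :
    ∀ᵐ y, 0 < fdil f θ μ y → 0 < f y := by
  have hS : Measure.QuasiMeasurePreserving (fun y => μ + θ • (y - μ))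
      (volume : Measure (EuclideanSpace ℝ (Fin d))) volume := by
    refine ⟨(measurable_const_add μ).comp ((measurable_const_smul θ).comp
      (measurable_id.sub_const μ)), ?_⟩
    rw [map_homothety_addHaar _ _ hθ]
    exact Measure.smul_absolutelyContinuous
  filter_upwards [hS.ae hadm] with y hy
  simpa [fdil, smul_smul, hθ] using hy

theorem pdil_restrict_le_smul {f : EuclideanSpace ℝ (Fin d) → ℝ} (hf : Measurable f) {θ : ℝ}
    (hθ : 0 < θ) {μ : EuclideanSpace ℝ (Fin d)} (hadm : Admissible f θ μ)
    {K : Set (EuclideanSpace ℝ (Fin d))} (hK : MeasurableSet K) {C : ℝ}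
    (hC : ∀ z ∈ K, 0 < f z → fdil f θ μ z / f z ≤ C) :
    (Pdil (volume.withDensity fun x => ENNReal.ofReal (f x)) θ μ).restrict K
      ≤ (ENNReal.ofReal (θ ^ d) * ENNReal.ofReal C) •
        (volume.withDensity fun x => ENNReal.ofReal (f x)).restrict K := by
  have hdens : ∀ᵐ y ∂volume.restrict K,
      ENNReal.ofReal (fdil f θ μ y) ≤ (ENNReal.ofReal C • fun x => ENNReal.ofReal (f x)) y := by
    filter_upwards [ae_restrict_of_ae (hadm.ae_pos_of_fdil_pos hθ.ne'), ae_restrict_mem hK]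
      with y hpos hyK
    rw [Pi.smul_apply, smul_eq_mul]
    by_cases hfy : 0 < f y
    · rw [← ENNReal.ofReal_mul' hfy.le]
      exact ENNReal.ofReal_le_ofReal ((div_le_iff₀ hfy).1 (hC y hyK hfy))
    · rw [ENNReal.ofReal_eq_zero.2 (not_lt.1 (mt hpos hfy))]
      exact bot_le
  rw [pdil_withDensity_ofReal hf hθ, Measure.restrict_smul, restrict_withDensity hK,
    restrict_withDensity hK, mul_smul, ← withDensity_smul _ hf.ennreal_ofReal]
  gcongr
  exact withDensity_mono hdens

end Dilation

theorem stmt_3_general {d : ℕ}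
    (f : EuclideanSpace ℝ (Fin d) → ℝ) (hfm : Measurable f)
    (P : Measure (EuclideanSpace ℝ (Fin d))) [IsProbabilityMeasure P]
    (hP : P = volume.withDensity fun x => ENNReal.ofReal (f x))
    (r : ℝ) (hr : 0 < r)
    (α : ℕ → Finset (EuclideanSpace ℝ (Fin d)))
    (hconv : Tendsto (fun n : ℕ => qerr P r (α n)) atTop (𝓝 0))
    (θ : ℝ) (hθ : 0 < θ) (μ : EuclideanSpace ℝ (Fin d))
    (hadm : Admissible f θ μ) (h1 : H1 f θ μ)
    (p : ℝ) (hp : p ∈ Ioo (0 : ℝ) 1) (b : ℝ) (hb : 0 < b) :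
    ∀ K : Set (EuclideanSpace ℝ (Fin d)), IsCompact K →
      (∫⁻ x in K, maxFun P α b x ^ p ∂(Pdil P θ μ)) < ⊤ := by
  intro K hK
  obtain ⟨M, hM, hKM⟩ := hK.isBounded.subset_ball_lt 0 0
  obtain ⟨C, hC⟩ := h1 M hM
  have hle := pdil_restrict_le_smul hfm hθ hadm hK.measurableSet fun z hz => hC z (hKM hz)
  rw [← hP] at hle
  obtain ⟨R, hR⟩ := exists_qdist_zero_le_of_tendsto_qerr hr hconv
  calc ∫⁻ x in K, maxFun P α b x ^ p ∂(Pdil P θ μ)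
      ≤ ∫⁻ x, maxFun P α b x ^ p ∂((ENNReal.ofReal (θ ^ d) * ENNReal.ofReal C) • P.restrict K) :=
        lintegral_mono' hle le_rfl
    _ = ENNReal.ofReal (θ ^ d) * ENNReal.ofReal C * ∫⁻ x in K, maxFun P α b x ^ p ∂P :=
        lintegral_smul_measure _ _
    _ < ⊤ := ENNReal.mul_lt_top (by finiteness)
        (setLIntegral_maxFun_rpow_lt_top P hR hb.le hK hp.1 hp.2)

/-- **Lemma 3.2 (a).**
Let `P = f·λ_d` with `∫ |x|^r dP < ∞`, let `(α_n)` be finite codebooks with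
`∫ d(x,α_n)^r dP → 0`, and let `(θ,μ)` be `P`-admissible satisfying (H1).
Then for every `p ∈ (0,1)` and every `b > 0`, `ψ_b^p` is locally
`P_{θ,μ}`-integrable. -/
theorem stmt_3 {d : ℕ} (hd : 1 ≤ d)
    (f : EuclideanSpace ℝ (Fin d) → ℝ) (hf0 : ∀ x, 0 ≤ f x) (hfm : Measurable f)
    (P : Measure (EuclideanSpace ℝ (Fin d))) [IsProbabilityMeasure P]
    (hP : P = volume.withDensity fun x => ENNReal.ofReal (f x))
    (r : ℝ) (hr : 0 < r)
    (hmom : (∫⁻ x, ENNReal.ofReal ‖x‖ ^ r ∂P) ≠ ⊤)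
    (α : ℕ → Finset (EuclideanSpace ℝ (Fin d)))
    (hne : ∀ n, 1 ≤ n → (α n).Nonempty)
    (hconv : Tendsto (fun n : ℕ => qerr P r (α n)) atTop (𝓝 0))
    (θ : ℝ) (hθ : 0 < θ) (μ : EuclideanSpace ℝ (Fin d))
    (hadm : Admissible f θ μ) (h1 : H1 f θ μ)
    (p : ℝ) (hp : p ∈ Ioo (0 : ℝ) 1) (b : ℝ) (hb : 0 < b) :
    ∀ K : Set (EuclideanSpace ℝ (Fin d)), IsCompact K →
      (∫⁻ x in K, maxFun P α b x ^ p ∂(Pdil P θ μ)) < ⊤ :=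
  stmt_3_general f hfm P hP r hr α hconv θ hθ μ hadm h1 p hp b hb
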